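/- In the mixed-drift setting, h(x) ≤ h₁(x₁) for all x = (x₁,x₂) in the open quadrant, where h₁(x₁) = x₁ − E[(x₁ + S₁(τ_{x₁})); τ_{x₁} < ∞] is the one-dimensional harmonic function of the first coordinate. -/

import Mathlib

open MeasureTheory ProbabilityTheory Filter Set
open scoped ENNReal NNReal

noncomputable def partialSum {Ω : Type*} (X : ℕ → Ω → ℝ) (n : ℕ) (ω : Ω) : ℝ :=
  ∑ i ∈ Finset.range n, X i ω

noncomputable def exitTime {Ω : Type*} (X : ℕ → Ω → ℝ) (x : ℝ) (ω : Ω) : ℕ∞ :=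
  sInf {n : ℕ∞ | ∃ m : ℕ, (m : ℕ∞) = n ∧ 1 ≤ m ∧ x + partialSum X m ω ≤ 0}

/-- One-dimensional harmonic function `h₁(x) = x − E[(x + S(τ_x)); τ_x < ∞]`. -/
noncomputable def hOne {Ω : Type*} [MeasureSpace Ω] (X : ℕ → Ω → ℝ) (x : ℝ) : ℝ :=
  x - ∫ ω, Set.indicator {ω | exitTime X x ω ≠ ⊤}
    (fun ω => x + partialSum X (exitTime X x ω).toNat ω) ω ∂ℙ

noncomputable def partialSum2 {Ω : Type*} (X : ℕ → Ω → ℝ × ℝ) (n : ℕ) (ω : Ω) : ℝ × ℝ :=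
  ∑ i ∈ Finset.range n, X i ω

noncomputable def exitTimeQuadrant {Ω : Type*} (X : ℕ → Ω → ℝ × ℝ) (x : ℝ × ℝ) (ω : Ω) : ℕ∞ :=
  sInf {n : ℕ∞ | ∃ m : ℕ, (m : ℕ∞) = n ∧ 1 ≤ m ∧
    ¬ (0 < x.1 + (partialSum2 X m ω).1 ∧ 0 < x.2 + (partialSum2 X m ω).2)}

/-- `h(x) = x₁ − E[(x₁ + S₁(τ_x)); τ_x < ∞]`. -/
noncomputable def hQ {Ω : Type*} [MeasureSpace Ω] (X : ℕ → Ω → ℝ × ℝ) (x : ℝ × ℝ) : ℝ :=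
  x.1 - ∫ ω, Set.indicator {ω | exitTimeQuadrant X x ω ≠ ⊤}
    (fun ω => x.1 + (partialSum2 X (exitTimeQuadrant X x ω).toNat ω).1) ω ∂ℙ

/-!
The comparison is pathwise. Since leaving the first half-plane means leaving the quadrant,
`τ_x ≤ τ_{x₁}`. The term `(x₁ + S₁(τ_{x₁})); τ_{x₁} < ∞` is always `≤ 0`. If the quadrant is left
through the first coordinate, then `τ_x = τ_{x₁}` and the two stopped terms agree; otherwise the
term `(x₁ + S₁(τ_x)); τ_x < ∞` is `≥ 0`. Integrating gives `E[…; τ_{x₁} < ∞] ≤ E[…; τ_x < ∞]`.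
-/

/-- `exitTime` and `exitTimeQuadrant` are definitionally `firstTime` of their exit events. -/
noncomputable def firstTime (P : ℕ → Prop) : ℕ∞ :=
  sInf {n : ℕ∞ | ∃ m : ℕ, (m : ℕ∞) = n ∧ P m}

section firstTime

variable {P Q : ℕ → Prop}

lemma firstTime_le {m : ℕ} (hm : P m) : firstTime P ≤ m :=
  sInf_le ⟨m, rfl, hm⟩

lemma firstTime_anti (hPQ : ∀ m, P m → Q m) : firstTime Q ≤ firstTime P :=
  sInf_le_sInf fun _ ⟨m, hm, hP⟩ => ⟨m, hm, hPQ m hP⟩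

lemma exists_natCast_eq_firstTime (h : firstTime P ≠ ⊤) :
    ∃ m : ℕ, (m : ℕ∞) = firstTime P ∧ P m := by
  have hne : {n : ℕ∞ | ∃ m : ℕ, (m : ℕ∞) = n ∧ P m}.Nonempty :=
    nonempty_iff_ne_empty.2 fun he => h (by rw [firstTime, he, sInf_empty])
  exact csInf_mem hne

lemma firstTime_toNat_spec (h : firstTime P ≠ ⊤) : P (firstTime P).toNat := by
  obtain ⟨m, hm, hP⟩ := exists_natCast_eq_firstTime h
  rwa [← hm, ENat.toNat_natCast]

lemma firstTime_spec_of_eq {n : ℕ} (h : firstTime P = n) : P n := by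
  obtain ⟨m, hm, hP⟩ := exists_natCast_eq_firstTime (h ▸ ENat.natCast_ne_top n)
  rw [h, Nat.cast_inj] at hm
  exact hm ▸ hP

end firstTime

section exitTimes

variable {Ω : Type*}

lemma partialSum2_fst (X : ℕ → Ω → ℝ × ℝ) (m : ℕ) (ω : Ω) :
    (partialSum2 X m ω).1 = partialSum (fun n ω => (X n ω).1) m ω :=
  Prod.fst_sum

lemma indicator_exitTime_nonpos (X : ℕ → Ω → ℝ) (x : ℝ) (ω : Ω) :
    {ω | exitTime X x ω ≠ ⊤}.indicator (fun ω => x + partialSum X (exitTime X x ω).toNat ω) ω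
      ≤ 0 := by
  by_cases h : exitTime X x ω = ⊤
  · simp [h]
  · rw [indicator_of_mem h]
    exact (firstTime_toNat_spec h).2

variable (X : ℕ → Ω → ℝ × ℝ) (x : ℝ × ℝ) (ω : Ω)

lemma exitTimeQuadrant_le_exitTime_fst :
    exitTimeQuadrant X x ω ≤ exitTime (fun n ω => (X n ω).1) x.1 ω :=
  firstTime_anti fun m ⟨hm, hexit⟩ =>
    ⟨hm, fun hpos => (hpos.1.trans_le (partialSum2_fst X m ω ▸ hexit)).false⟩

lemma exitTime_fst_eq_exitTimeQuadrant {n : ℕ} (hn : exitTimeQuadrant X x ω = n)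
    (hexit : x.1 + (partialSum2 X n ω).1 ≤ 0) :
    exitTime (fun n ω => (X n ω).1) x.1 ω = n := by
  refine le_antisymm (firstTime_le ⟨(firstTime_spec_of_eq hn).1, ?_⟩)
    (hn ▸ exitTimeQuadrant_le_exitTime_fst X x ω)
  rwa [← partialSum2_fst]

lemma indicator_exitTime_fst_le_indicator_exitTimeQuadrant :
    {ω | exitTime (fun n ω => (X n ω).1) x.1 ω ≠ ⊤}.indicator
        (fun ω => x.1 + partialSum (fun n ω => (X n ω).1)
          (exitTime (fun n ω => (X n ω).1) x.1 ω).toNat ω) ω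
      ≤ {ω | exitTimeQuadrant X x ω ≠ ⊤}.indicator
        (fun ω => x.1 + (partialSum2 X (exitTimeQuadrant X x ω).toNat ω).1) ω := by
  by_cases htop : exitTimeQuadrant X x ω = ⊤
  · have h1top : exitTime (fun n ω => (X n ω).1) x.1 ω = ⊤ :=
      top_le_iff.1 (htop ▸ exitTimeQuadrant_le_exitTime_fst X x ω)
    simp [htop, h1top]
  obtain ⟨n, hn⟩ := ENat.ne_top_iff_exists.1 htop
  rw [indicator_of_mem (s := {ω | exitTimeQuadrant X x ω ≠ ⊤}) htop, ← hn, ENat.toNat_natCast]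
  by_cases hexit : x.1 + (partialSum2 X n ω).1 ≤ 0
  · rw [indicator_of_mem (by simp [exitTime_fst_eq_exitTimeQuadrant X x ω hn.symm hexit]),
      exitTime_fst_eq_exitTimeQuadrant X x ω hn.symm hexit, ENat.toNat_natCast, partialSum2_fst]
  · exact (indicator_exitTime_nonpos _ x.1 ω).trans (not_le.1 hexit).le

end exitTimes

theorem hQ_le_hOne_general
    {Ω : Type*} [MeasureSpace Ω]
    (X : ℕ → Ω → ℝ × ℝ)
    (hfin : ∀ x : ℝ × ℝ, 0 < x.1 → 0 < x.2 →
      Integrable (Set.indicator {ω | exitTimeQuadrant X x ω ≠ ⊤}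
        (fun ω => x.1 + (partialSum2 X (exitTimeQuadrant X x ω).toNat ω).1)) ℙ)
    (hfin1 : ∀ x₁ : ℝ, 0 < x₁ →
      Integrable (Set.indicator {ω | exitTime (fun n ω => (X n ω).1) x₁ ω ≠ ⊤}
        (fun ω => x₁ + partialSum (fun n ω => (X n ω).1) (exitTime (fun n ω => (X n ω).1) x₁ ω).toNat ω)) ℙ)
    (x : ℝ × ℝ) (hx1 : 0 < x.1) (hx2 : 0 < x.2) :
    hQ X x ≤ hOne (fun n ω => (X n ω).1) x.1 :=
  sub_le_sub_left (integral_mono (hfin1 x.1 hx1) (hfin x hx1 hx2)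
    (indicator_exitTime_fst_le_indicator_exitTimeQuadrant X x)) x.1

/-- in the mixed-drift setting, `h(x) ≤ h₁(x₁)` on the open quadrant. -/
theorem hQ_le_hOne
    {Ω : Type*} [MeasureSpace Ω] [IsProbabilityMeasure (ℙ : Measure Ω)]
    (X : ℕ → Ω → ℝ × ℝ) (X0 : Ω → ℝ × ℝ) (δ : ℝ) (hδ : 0 < δ)
    (hmeas : ∀ n, Measurable (X n))
    (hindep : iIndepFun X ℙ)
    (hident : ∀ n, IdentDistrib (X n) X0 ℙ ℙ)
    (hcent1 : ∫ ω, (X0 ω).1 ∂ℙ = 0)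
    (hmom1 : Integrable (fun ω => |(X0 ω).1| ^ (2 + δ)) ℙ)
    (hsq2 : Integrable (fun ω => (X0 ω).2 ^ 2) ℙ)
    (hdrift2 : 0 < ∫ ω, (X0 ω).2 ∂ℙ)
    (hmom2 : Integrable (fun ω => max (-(X0 ω).2) 0 ^ (3 + δ)) ℙ)
    (hfin : ∀ x : ℝ × ℝ, 0 < x.1 → 0 < x.2 →
      Integrable (Set.indicator {ω | exitTimeQuadrant X x ω ≠ ⊤}
        (fun ω => x.1 + (partialSum2 X (exitTimeQuadrant X x ω).toNat ω).1)) ℙ)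
    (hfin1 : ∀ x₁ : ℝ, 0 < x₁ →
      Integrable (Set.indicator {ω | exitTime (fun n ω => (X n ω).1) x₁ ω ≠ ⊤}
        (fun ω => x₁ + partialSum (fun n ω => (X n ω).1) (exitTime (fun n ω => (X n ω).1) x₁ ω).toNat ω)) ℙ)
    (x : ℝ × ℝ) (hx1 : 0 < x.1) (hx2 : 0 < x.2) :
    hQ X x ≤ hOne (fun n ω => (X n ω).1) x.1 :=
  hQ_le_hOne_general X hfin hfin1 x hx1 hx2
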